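/- Let d ≥ 1, f ∈ C^∞(ℝ^d, ℝ^d), x₀ ∈ ℝ^d, q > 1, and let λ₀ be the smallest λ > 0 satisfying h_q(λ) = 1. Suppose T > 0 satisfies e λ₀ T |∇^m f(x₀)| < 1 for all m ≥ 0, and that for every m ≥ 0, sup_{|x − x₀| < T (1 − e^{−λ₀ T})^{−1/(2q)}} |∇^m f(x)| < (1 − e^{−λ₀ T})^{−1/(2q)}. Then the initial value problem x'(t) = f(x(t)) on [0,T] with x(0) = x₀ has a classical solution x ∈ C¹([0,T], ℝ^d). -/

import Mathlib

/-- `h_q(λ) := λ e^{−λ/e} (√(4 + e^{−2λ/e}) − e^{−λ/e})^{1/q} / (2^{1/q}(1 − e^{−λ/e})^{1/(2q)})`. -/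
noncomputable def hFun (q lam : ℝ) : ℝ :=
  lam * Real.exp (-(lam / Real.exp 1)) *
    ((Real.sqrt (4 + Real.exp (-(2 * lam / Real.exp 1))) - Real.exp (-(lam / Real.exp 1))) ^ (1 / q)
      / ((2:ℝ) ^ (1 / q) * (1 - Real.exp (-(lam / Real.exp 1))) ^ (1 / (2 * q))))

/-!
Since `λ₀ > 0`, the constant `M = (1 - e^{-λ₀T})^{-1/(2q)}` is positive, and a bound `K < M` for
`|f|` on the ball of radius `T M` bounds `|f|` by `K` on the closed ball of radius `T K`. A field
bounded by `K` there cannot carry a solution started at the centre out of that ball before time `T`,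
so Picard–Lindelöf applies on `[0, T]`: a `C¹` field is Lipschitz on the compact ball. The solution
is `C¹` because its derivative `f ∘ x` is continuous.
-/

open Metric Set

section AutonomousODE

variable {E : Type*} [NormedAddCommGroup E] [NormedSpace ℝ E] [ProperSpace E] {f : E → E}
  {x₀ : E} {T a K : ℝ}

theorem LocallyLipschitz.exists_forall_mem_Icc_hasDerivWithinAt (hf : LocallyLipschitz f)
    (hT : 0 ≤ T) (hK₀ : 0 ≤ K) (hK : ∀ z ∈ closedBall x₀ a, ‖f z‖ ≤ K) (hKT : K * T ≤ a) :
    ∃ α : ℝ → E, α 0 = x₀ ∧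
      ∀ t ∈ Icc 0 T, HasDerivWithinAt α (f (α t)) (Icc 0 T) t := by
  have ha : 0 ≤ a := (mul_nonneg hK₀ hT).trans hKT
  obtain ⟨L, hL⟩ := hf.locallyLipschitzOn.exists_lipschitzOnWith_of_compact
    (isCompact_closedBall x₀ a)
  have hpl : IsPicardLindelof (fun _ ↦ f) (⟨0, le_rfl, hT⟩ : Icc (0 : ℝ) T) x₀
      ⟨a, ha⟩ 0 ⟨K, hK₀⟩ L :=
    .of_time_independent hK hL
      (show K * max (T - 0) (0 - 0) ≤ a - 0 by simpa [max_eq_left hT] using hKT)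
  exact hpl.exists_eq_forall_mem_Icc_hasDerivWithinAt₀

theorem ContDiff.exists_contDiffOn_Icc_forall_hasDerivWithinAt (hf : ContDiff ℝ 1 f)
    (hT : 0 ≤ T) (hK₀ : 0 ≤ K) (hK : ∀ z ∈ closedBall x₀ a, ‖f z‖ ≤ K) (hKT : K * T ≤ a) :
    ∃ α : ℝ → E, ContDiffOn ℝ 1 α (Icc 0 T) ∧ α 0 = x₀ ∧
      ∀ t ∈ Icc 0 T, HasDerivWithinAt α (f (α t)) (Icc 0 T) t := by
  obtain ⟨α, hα₀, hα⟩ := hf.locallyLipschitz.exists_forall_mem_Icc_hasDerivWithinAt hT hK₀ hK hKT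
  have hα_contDiff : ContDiffOn ℝ (1 : ℕ∞) α (Icc 0 T) :=
    ODE.contDiffOn_enat_Icc_of_hasDerivWithinAt (f := fun _ ↦ f) (u := univ)
      (hf.comp contDiff_snd).contDiffOn hα (mapsTo_univ _ _)
  exact ⟨α, hα_contDiff, hα₀, hα⟩

end AutonomousODE

theorem stmt_12_general (d : ℕ)
    (f : EuclideanSpace ℝ (Fin d) → EuclideanSpace ℝ (Fin d)) (hf : ContDiff ℝ (⊤ : ℕ∞) f)
    (x₀ : EuclideanSpace ℝ (Fin d)) (q : ℝ) (lam0 : ℝ)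
    (hlam0 : IsLeast {lam : ℝ | 0 < lam ∧ hFun q lam = 1} lam0)
    (T : ℝ) (hT : 0 < T)
    (hsup : ∀ m : ℕ, ∃ K : ℝ, K < (1 - Real.exp (-(lam0 * T))) ^ (-(1 / (2 * q))) ∧
      ∀ z : EuclideanSpace ℝ (Fin d),
        ‖z - x₀‖ < T * (1 - Real.exp (-(lam0 * T))) ^ (-(1 / (2 * q))) →
        ‖iteratedFDeriv ℝ m f z‖ ≤ K) :
    ∃ x : ℝ → EuclideanSpace ℝ (Fin d),
      ContDiffOn ℝ 1 x (Set.Icc 0 T) ∧ x 0 = x₀ ∧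
      ∀ t ∈ Set.Icc (0:ℝ) T, HasDerivWithinAt x (f (x t)) (Set.Icc 0 T) t := by
  set M := (1 - Real.exp (-(lam0 * T))) ^ (-(1 / (2 * q)))
  have hM : 0 < M := by
    have : Real.exp (-(lam0 * T)) < 1 := Real.exp_lt_one_iff.2 (by nlinarith [hlam0.1.1])
    exact Real.rpow_pos_of_pos (by linarith) _
  obtain ⟨K, hKM, hK⟩ := hsup 0
  simp only [norm_iteratedFDeriv_zero] at hK
  have hK₀ : 0 ≤ K := (norm_nonneg _).trans (hK x₀ (by simpa using mul_pos hT hM))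
  refine (hf.of_le (by simp)).exists_contDiffOn_Icc_forall_hasDerivWithinAt hT.le hK₀
    (fun z hz ↦ hK z ?_) (mul_comm K T).le
  calc ‖z - x₀‖ ≤ T * K := mem_closedBall_iff_norm.1 hz
    _ < T * M := mul_lt_mul_of_pos_left hKM hT

/-- Existence intervals: with `λ₀` the smallest positive root of
`h_q(λ) = 1`, if `e λ₀ T |∇^m f(x₀)| < 1` for all `m` and
`sup_{|x−x₀| < T(1−e^{−λ₀T})^{−1/(2q)}} |∇^m f(x)| < (1−e^{−λ₀T})^{−1/(2q)}` for all `m`,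
then `x' = f(x)`, `x(0) = x₀` has a classical solution on `[0,T]`. -/
theorem stmt_12 (d : ℕ) (hd : 1 ≤ d)
    (f : EuclideanSpace ℝ (Fin d) → EuclideanSpace ℝ (Fin d)) (hf : ContDiff ℝ (⊤ : ℕ∞) f)
    (x₀ : EuclideanSpace ℝ (Fin d)) (q : ℝ) (hq : 1 < q) (lam0 : ℝ)
    (hlam0 : IsLeast {lam : ℝ | 0 < lam ∧ hFun q lam = 1} lam0)
    (T : ℝ) (hT : 0 < T)
    (hder : ∀ m : ℕ, Real.exp 1 * lam0 * T * ‖iteratedFDeriv ℝ m f x₀‖ < 1)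
    (hsup : ∀ m : ℕ, ∃ K : ℝ, K < (1 - Real.exp (-(lam0 * T))) ^ (-(1 / (2 * q))) ∧
      ∀ z : EuclideanSpace ℝ (Fin d),
        ‖z - x₀‖ < T * (1 - Real.exp (-(lam0 * T))) ^ (-(1 / (2 * q))) →
        ‖iteratedFDeriv ℝ m f z‖ ≤ K) :
    ∃ x : ℝ → EuclideanSpace ℝ (Fin d),
      ContDiffOn ℝ 1 x (Set.Icc 0 T) ∧ x 0 = x₀ ∧
      ∀ t ∈ Set.Icc (0:ℝ) T, HasDerivWithinAt x (f (x t)) (Set.Icc 0 T) t :=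
  stmt_12_general d f hf x₀ q lam0 hlam0 T hT hsup
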